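/- The elements c_2, c_3, …, c_p are algebraically independent over ℚ; hence the ring of invariants {g ∈ ℚ[a_1,…,a_p] : η_R(g) = g} is a polynomial ℚ-algebra on the p−1 generators c_2, …, c_p. -/

import Mathlib

/-!
Fix a prime `p`.  `Apoly p = ℚ[a_1,…,a_p]` (the variable `⟨i-1⟩ : Fin p` stands for `a_i`),
`Γ = (Apoly p)[r]`, and `etaR` is the unique ℚ-algebra map with
`η_R(a_i) = ∑_{j=0}^{i} C(p-j, i-j) a_j r^{i-j}` (with `a_0 = 1`).
`cgen p i` is the element `c_i = ∑_{j=0}^{i} C(p-j,i-j) (-1)^j a_j a_1^{i-j} p^j`.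
-/

/-- The polynomial ring `ℚ[a_1,…,a_p]`. -/
abbrev Apoly (p : ℕ) : Type := MvPolynomial (Fin p) ℚ

/-- `av p j` is the generator `a_j`, with the convention `a_0 = 1`. -/
noncomputable def av (p : ℕ) (j : ℕ) : Apoly p :=
  if j = 0 then 1 else if h : 1 ≤ j ∧ j ≤ p then MvPolynomial.X ⟨j - 1, by omega⟩ else 0

/-- The right unit `η_R : ℚ[a_1,…,a_p] → ℚ[a_1,…,a_p][r]`, determined by
`η_R(a_i) = ∑_{j=0}^{i} C(p-j, i-j)·a_j·r^{i-j}` (here `a_{k+1}` is the variable `k : Fin p`). -/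
noncomputable def etaR (p : ℕ) : Apoly p →ₐ[ℚ] Polynomial (Apoly p) :=
  MvPolynomial.aeval (fun k : Fin p =>
    ∑ j ∈ Finset.range (k.1 + 2),
      (Nat.choose (p - j) (k.1 + 1 - j) : Polynomial (Apoly p)) *
        Polynomial.C (av p j) * Polynomial.X ^ (k.1 + 1 - j))

/-- The invariant elements `c_i = ∑_{j=0}^{i} C(p-j,i-j)·(-1)^j·a_j·a_1^{i-j}·p^j`. -/
noncomputable def cgen (p i : ℕ) : Apoly p :=
  ∑ j ∈ Finset.range (i + 1),
    (Nat.choose (p - j) (i - j) : Apoly p) * (-1 : Apoly p) ^ j * av p j *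
      (av p 1) ^ (i - j) * (p : Apoly p) ^ j

/-!
Write `P(x) = ∑_{j ≤ p} a_j x^{p-j}`. Then `η_R(a_i)` is the coefficient of `x^{p-i}` in
`P(x + r)`, so `η_R` is the coaction of translations `x ↦ x + r`, and more generally `a_i ↦`
(coefficient of `x^{p-i}` in `P(x + t)`) defines an algebra map `taylorHom t` for any `t`.
Since translations compose (`taylor_taylor`),
`taylorHom u ∘ taylorHom t = taylorHom (u + taylorHom u t)`.

The Tschirnhaus shift `s = -a_1/p` satisfies `η_R(s) = s - r`, so `σ = taylorHom s`
(`depress`) takes values in the invariants, and it fixes every invariant `g`, because `σ g`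
is `η_R(g)` evaluated at `r = s`. Hence the invariants are the image of `σ`, which is
generated by `σ(a_1) = 0` and `σ(a_i) = (-p)^{-i} c_i`. For independence, the substitution
`κ = killFirst` killing `a_1` (and rescaling the other `a_i`) kills `s`, so `κ ∘ σ = κ`, and it
sends `c_i` to `a_i`.
-/

open Finset Polynomial

section Shift

variable {R : Type*} [CommRing R] (p : ℕ)

noncomputable def revPoly (a : ℕ → R) : R[X] :=
  ∑ j ∈ range (p + 1), C (a j) * X ^ (p - j)

def taylorCoeff (a : ℕ → R) (t : R) (i : ℕ) : R :=
  ∑ j ∈ range (i + 1), ((p - j).choose (i - j) : R) * a j * t ^ (i - j)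

variable {p}

lemma coeff_revPoly (a : ℕ → R) {n : ℕ} (hn : n ≤ p) : (revPoly p a).coeff n = a (p - n) := by
  rw [revPoly, finsetSum_coeff, sum_eq_single (p - n)]
  · simp [Nat.sub_sub_self hn]
  · intro j hj hjn
    simp only [mem_range] at hj
    rw [coeff_C_mul, coeff_X_pow, if_neg (by omega), mul_zero]
  · simp

lemma natDegree_revPoly_le (a : ℕ → R) : (revPoly p a).natDegree ≤ p :=
  natDegree_sum_le_of_forall_le _ _ fun j _ =>
    (natDegree_C_mul_X_pow_le _ _).trans (Nat.sub_le p j)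

lemma coeff_taylor_revPoly (a : ℕ → R) (t : R) {i : ℕ} (hi : i ≤ p) :
    (taylor t (revPoly p a)).coeff (p - i) = taylorCoeff p a t i := by
  have hsub : range (i + 1) ⊆ range (p + 1) := range_subset_range.mpr (by omega)
  simp only [revPoly, taylorCoeff, map_sum, finsetSum_coeff, taylor_apply, mul_comp, C_comp,
    X_pow_comp, coeff_C_mul, coeff_X_add_C_pow]
  rw [← sum_subset hsub]
  · refine sum_congr rfl fun j hj => ?_
    have hj : j ≤ i := Nat.lt_succ_iff.mp (mem_range.mp hj)
    rw [Nat.choose_symm_of_eq_add (by omega : p - j = p - i + (i - j)),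
      show p - j - (p - i) = i - j by omega]
    ring
  · intro j hjp hj
    simp only [mem_range] at hjp hj
    rw [Nat.choose_eq_zero_of_lt (by omega)]
    simp

lemma revPoly_taylorCoeff (a : ℕ → R) (t : R) :
    revPoly p (taylorCoeff p a t) = taylor t (revPoly p a) := by
  ext n
  rcases le_or_gt n p with hn | hn
  · rw [coeff_revPoly _ hn, ← coeff_taylor_revPoly a t (Nat.sub_le p n), Nat.sub_sub_self hn]
  · rw [coeff_eq_zero_of_natDegree_lt ((natDegree_revPoly_le _).trans_lt hn),
      coeff_eq_zero_of_natDegree_lt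
        (((natDegree_taylor _ t).trans_le (natDegree_revPoly_le a)).trans_lt hn)]

lemma taylorCoeff_taylorCoeff (a : ℕ → R) (t u : R) {i : ℕ} (hi : i ≤ p) :
    taylorCoeff p (taylorCoeff p a t) u i = taylorCoeff p a (t + u) i := by
  rw [← coeff_taylor_revPoly _ _ hi, revPoly_taylorCoeff, taylor_taylor, add_comm,
    coeff_taylor_revPoly _ _ hi]

lemma taylorCoeff_congr {a b : ℕ → R} (t : R) {i : ℕ} (h : ∀ j ≤ i, a j = b j) :
    taylorCoeff p a t i = taylorCoeff p b t i :=
  sum_congr rfl fun j hj => by rw [h j (Nat.lt_succ_iff.mp (mem_range.mp hj))]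

lemma map_taylorCoeff {S F : Type*} [CommRing S] [FunLike F R S] [RingHomClass F R S] (f : F)
    (a : ℕ → R) (t : R) (i : ℕ) :
    f (taylorCoeff p a t i) = taylorCoeff p (f ∘ a) (f t) i := by
  simp [taylorCoeff, map_sum]

lemma taylorCoeff_zero (a : ℕ → R) (i : ℕ) : taylorCoeff p a 0 i = a i := by
  rw [taylorCoeff, sum_eq_single i]
  · simp
  · intro j hj hji
    simp only [mem_range] at hj
    rw [zero_pow (by omega), mul_zero]
  · simp

end Shift

lemma av_succ (p : ℕ) (k : Fin p) : av p (k + 1) = MvPolynomial.X k := by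
  rw [av, if_neg k.1.succ_ne_zero, dif_pos ⟨by omega, k.2⟩]
  rfl

section TaylorHom

variable {p : ℕ} {B : Type*} [CommRing B] [Algebra ℚ B] [Algebra (Apoly p) B]

variable (p) in
noncomputable def taylorHom (t : B) : Apoly p →ₐ[ℚ] B :=
  MvPolynomial.aeval fun k => taylorCoeff p (fun j => algebraMap (Apoly p) B (av p j)) t (k + 1)

lemma taylorHom_av (t : B) {i : ℕ} (hi : i ≤ p) :
    taylorHom p t (av p i) = taylorCoeff p (fun j => algebraMap (Apoly p) B (av p j)) t i := by
  cases i with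
  | zero => simp [av, taylorCoeff]
  | succ k =>
    rw [av_succ p ⟨k, hi⟩, taylorHom, MvPolynomial.aeval_X]

lemma comp_taylorHom [IsScalarTower ℚ (Apoly p) B] {B' : Type*} [CommRing B'] [Algebra ℚ B']
    [Algebra (Apoly p) B'] [IsScalarTower ℚ (Apoly p) B'] (f : B →ₐ[Apoly p] B') (t : B) :
    (f.restrictScalars ℚ).comp (taylorHom p t) = taylorHom p (f t) := by
  refine MvPolynomial.algHom_ext fun k => ?_
  simp only [taylorHom, AlgHom.comp_apply, MvPolynomial.aeval_X, AlgHom.coe_restrictScalars',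
    map_taylorCoeff, Function.comp_def, AlgHom.commutes]

lemma taylorHom_comp_taylorHom (t : Apoly p) (u : B) :
    (taylorHom p u).comp (taylorHom p t) = taylorHom p (u + taylorHom p u t) := by
  refine MvPolynomial.algHom_ext fun k => ?_
  have hk : k.1 + 1 ≤ p := k.2
  rw [← av_succ, AlgHom.comp_apply, taylorHom_av _ hk, taylorHom_av _ hk, map_taylorCoeff,
    ← taylorCoeff_taylorCoeff _ _ _ hk]
  refine taylorCoeff_congr _ fun j hj => ?_
  simp [taylorHom_av _ (hj.trans hk)]

lemma etaR_eq_taylorHom : etaR p = taylorHom p (X : (Apoly p)[X]) := rfl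

end TaylorHom

section Depress

variable {p : ℕ}

variable (p) in
noncomputable def depressShift : Apoly p := -(p : ℚ)⁻¹ • av p 1

variable (p) in
noncomputable def depress : Apoly p →ₐ[ℚ] Apoly p := taylorHom p (depressShift p)

lemma taylorHom_av_one {B : Type*} [CommRing B] [Algebra ℚ B] [Algebra (Apoly p) B]
    (hp : p ≠ 0) (t : B) :
    taylorHom p t (av p 1) = p * t + algebraMap (Apoly p) B (av p 1) := by
  rw [taylorHom_av t (Nat.one_le_iff_ne_zero.mpr hp), taylorCoeff, sum_range_succ,
    sum_range_one]
  simp [av]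

lemma taylorHom_depressShift {B : Type*} [CommRing B] [Algebra ℚ B] [Algebra (Apoly p) B]
    [IsScalarTower ℚ (Apoly p) B] (hp : p ≠ 0) (t : B) :
    taylorHom p t (depressShift p) = algebraMap (Apoly p) B (depressShift p) - t := by
  have hinv : algebraMap ℚ B (-(p : ℚ)⁻¹) * p = -1 := by
    rw [← map_natCast (algebraMap ℚ B), ← map_mul, neg_mul, inv_mul_cancel₀ (by exact_mod_cast hp),
      map_neg, map_one]
  rw [depressShift, Algebra.smul_def, map_mul, AlgHom.commutes, taylorHom_av_one hp, map_mul,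
    ← IsScalarTower.algebraMap_apply]
  linear_combination t * hinv

lemma natCast_mul_depressShift (hp : p ≠ 0) : (p : Apoly p) * depressShift p = -av p 1 := by
  rw [depressShift, mul_smul_comm, ← nsmul_eq_mul, ← Nat.cast_smul_eq_nsmul ℚ, smul_smul, neg_mul,
    inv_mul_cancel₀ (by exact_mod_cast hp), neg_smul, one_smul]

lemma depress_av_one (hp : p ≠ 0) : depress p (av p 1) = 0 := by
  rw [depress, taylorHom_av_one hp, natCast_mul_depressShift hp, Algebra.algebraMap_self,
    RingHom.id_apply, neg_add_cancel]

lemma etaR_comp_depress (hp : p ≠ 0) :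
    (etaR p).comp (depress p) =
      ((Algebra.ofId (Apoly p) (Apoly p)[X]).restrictScalars ℚ).comp (depress p) := by
  rw [etaR_eq_taylorHom, depress, taylorHom_comp_taylorHom, taylorHom_depressShift hp,
    add_sub_cancel, comp_taylorHom]
  rfl

lemma depress_of_etaR_eq_C {g : Apoly p} (hg : etaR p g = C g) : depress p g = g := by
  have h := congrArg (· g) (comp_taylorHom (Polynomial.aeval (R := Apoly p) (depressShift p)) X)
  simp only [AlgHom.comp_apply, AlgHom.coe_restrictScalars', ← etaR_eq_taylorHom, hg,
    aeval_C, aeval_X] at h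
  exact h.symm

lemma cgen_eq_smul_depress (hp : p ≠ 0) {i : ℕ} (hi : i ≤ p) :
    cgen p i = ((-p : ℚ) ^ i) • depress p (av p i) := by
  have key : av p 1 = -(p : Apoly p) * depressShift p := by
    rw [neg_mul, natCast_mul_depressShift hp, neg_neg]
  rw [depress, taylorHom_av _ hi, taylorCoeff, cgen, smul_sum]
  refine sum_congr rfl fun j hj => ?_
  obtain ⟨d, rfl⟩ : ∃ d, i = j + d := ⟨i - j, by simp at hj; omega⟩
  rw [Algebra.smul_def, map_pow, map_neg, map_natCast, Algebra.algebraMap_self, RingHom.id_apply,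
    Nat.add_sub_cancel_left, key]
  ring

end Depress

section Invariants

variable {p : ℕ}

lemma etaR_cgen (hp : p ≠ 0) {i : ℕ} (hi : i ≤ p) : etaR p (cgen p i) = C (cgen p i) := by
  rw [cgen_eq_smul_depress hp hi, map_smul, ← AlgHom.comp_apply, etaR_comp_depress hp,
    AlgHom.comp_apply, ← map_smul]
  rfl

lemma range_depress_le_adjoin_cgen (hp : p ≠ 0) :
    (depress p).range ≤ Algebra.adjoin ℚ (Set.range fun i : Fin (p - 1) => cgen p (i.1 + 2)) := by
  rw [← Algebra.map_top, ← MvPolynomial.adjoin_range_X, AlgHom.map_adjoin, Algebra.adjoin_le_iff]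
  rintro _ ⟨_, ⟨⟨k, hk⟩, rfl⟩, rfl⟩
  rw [← av_succ]
  cases k with
  | zero => simp only [zero_add, depress_av_one hp, SetLike.mem_coe, zero_mem]
  | succ m =>
    have hne : ((-p : ℚ) ^ (m + 2)) ≠ 0 := pow_ne_zero _ (by simpa using hp)
    rw [← (inv_smul_eq_iff₀ hne).mpr (cgen_eq_smul_depress hp hk)]
    exact Subalgebra.smul_mem _
      (Algebra.subset_adjoin (Set.mem_range_self (⟨m, by omega⟩ : Fin (p - 1)))) _

lemma setOf_etaR_eq_C_eq_adjoin_cgen (hp : p ≠ 0) :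
    {g : Apoly p | etaR p g = C g} =
      ↑(Algebra.adjoin ℚ (Set.range fun i : Fin (p - 1) => cgen p (i.1 + 2))) := by
  refine Set.Subset.antisymm (fun g hg => ?_) ?_
  · rw [← depress_of_etaR_eq_C hg]
    exact range_depress_le_adjoin_cgen hp ⟨g, rfl⟩
  · refine Algebra.adjoin_le (S := AlgHom.equalizer (etaR p)
      (IsScalarTower.toAlgHom ℚ (Apoly p) (Apoly p)[X])) ?_
    rintro _ ⟨i, rfl⟩
    exact etaR_cgen hp (by omega)

end Invariants

section Independence

variable {p : ℕ}

variable (p) in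
noncomputable def killFirst : Apoly p →ₐ[ℚ] Apoly p :=
  MvPolynomial.aeval fun k => if k.1 = 0 then 0 else ((-p : ℚ) ^ (k.1 + 1))⁻¹ • MvPolynomial.X k

lemma killFirst_comp_depress (hp : p ≠ 0) : (killFirst p).comp (depress p) = killFirst p := by
  have hs : killFirst p (depressShift p) = 0 := by
    rw [depressShift, map_smul, show av p 1 = MvPolynomial.X ⟨0, by omega⟩ from av_succ p ⟨0, _⟩]
    simp [killFirst]
  refine MvPolynomial.algHom_ext fun k => ?_
  rw [← av_succ, AlgHom.comp_apply, depress, taylorHom_av _ k.2, map_taylorCoeff, hs,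
    taylorCoeff_zero]
  simp

lemma killFirst_cgen (hp : p ≠ 0) (i : Fin (p - 1)) :
    killFirst p (cgen p (i.1 + 2)) = MvPolynomial.X ⟨i.1 + 1, by omega⟩ := by
  have hne : ((-p : ℚ) ^ (i.1 + 2)) ≠ 0 := pow_ne_zero _ (by simpa using hp)
  rw [cgen_eq_smul_depress hp (by omega), map_smul, ← AlgHom.comp_apply, killFirst_comp_depress hp,
    show i.1 + 2 = (⟨i.1 + 1, by omega⟩ : Fin p).1 + 1 from rfl, av_succ, killFirst,
    MvPolynomial.aeval_X, if_neg (Nat.succ_ne_zero _), smul_smul, mul_inv_cancel₀ hne, one_smul]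

lemma algebraicIndependent_cgen (hp : p ≠ 0) :
    AlgebraicIndependent ℚ (fun i : Fin (p - 1) => cgen p (i.1 + 2)) := by
  refine AlgebraicIndependent.of_comp (killFirst p) ?_
  have hinj : Function.Injective fun i : Fin (p - 1) => (⟨i.1 + 1, by omega⟩ : Fin p) :=
    fun i j h => Fin.ext (by simpa using h)
  convert (MvPolynomial.algebraicIndependent_X (Fin p) ℚ).comp _ hinj using 1
  exact funext (killFirst_cgen hp)

end Independence

/-- The elements `c_2, …, c_p` are algebraically independent over ℚ; hence the ring of
invariants is a polynomial ℚ-algebra on the `p - 1` generators `c_2, …, c_p`. -/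
theorem c_algebraicallyIndependent_and_invariants_polynomial (p : ℕ) (hp : p.Prime) :
    AlgebraicIndependent ℚ (fun i : Fin (p - 1) => cgen p (i.1 + 2)) ∧
    {g : Apoly p | etaR p g = Polynomial.C g} =
      ↑(Algebra.adjoin ℚ (Set.range (fun i : Fin (p - 1) => cgen p (i.1 + 2)))) ∧
    Nonempty
      ((Algebra.adjoin ℚ (Set.range (fun i : Fin (p - 1) => cgen p (i.1 + 2)))) ≃ₐ[ℚ]
        MvPolynomial (Fin (p - 1)) ℚ) := by
  have hind := algebraicIndependent_cgen hp.ne_zero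
  exact ⟨hind, setOf_etaR_eq_C_eq_adjoin_cgen hp.ne_zero, ⟨hind.aevalEquiv.symm⟩⟩
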